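/- Let Γ ∈ ℝ^{d×d} be symmetric positive definite, let D ∈ ℝ^{d×k} and let M ∈ ℝ^{d×d} be symmetric. Consider the scalar function F(V) := Tr[ Dᵀ P_V M P_V D ] defined on the open set of matrices V ∈ ℝ^{d×s} with VᵀΓV invertible, where P_V := Γ⁻¹ − V(VᵀΓV)⁻¹Vᵀ. Then F is Fréchet differentiable and its Euclidean gradient (the matrix G with D_V F[H] = Tr[GᵀH] for all H) is G = −4 Γ P_V Sym(D Dᵀ P_V M) V (VᵀΓV)⁻¹, where Sym(W) := (W + Wᵀ)/2. -/

import Mathlib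

open Matrix

attribute [local instance] Matrix.normedAddCommGroup Matrix.normedSpace

/-- The `Γ`-orthogonal projection matrix `P_V = Γ⁻¹ − V(VᵀΓV)⁻¹Vᵀ`. -/
noncomputable def Pmat {d s : ℕ} (Γ : Matrix (Fin d) (Fin d) ℝ)
    (V : Matrix (Fin d) (Fin s) ℝ) : Matrix (Fin d) (Fin d) ℝ :=
  Γ⁻¹ - V * (Vᵀ * Γ * V)⁻¹ * Vᵀ

/-- The symmetric part `Sym(W) = (W + Wᵀ)/2`. -/
noncomputable def symPart {d : ℕ} (W : Matrix (Fin d) (Fin d) ℝ) : Matrix (Fin d) (Fin d) ℝ :=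
  (1 / 2 : ℝ) • (W + Wᵀ)

/-!
With `N = (VᵀΓV)⁻¹`, the derivative of `V ↦ N` is `H ↦ -N (HᵀΓV + VᵀΓH) N`. Because
`P_V Γ = 1 - V N Vᵀ Γ`, the resulting variation of the projection is the symmetrisation
`δP = -(X + Xᵀ)` of `X = P_V Γ H N Vᵀ`. As `F` is quadratic in the symmetric matrix `P_V` and
`M` is symmetric, its variation is `tr(δP (W + Wᵀ))` with `W = D Dᵀ P_V M`. Since `W + Wᵀ` is
symmetric this equals `-2 tr(X (W + Wᵀ))`, and cyclicity of the trace rewrites it as `tr(Gᵀ H)`.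
-/

theorem MulEquiv.map_ringInverse {M N : Type*} [MonoidWithZero M] [MonoidWithZero N]
    (e : M ≃* N) (x : M) : e (Ring.inverse x) = Ring.inverse (e x) := by
  by_cases hx : IsUnit x
  · obtain ⟨u, rfl⟩ := hx
    have hu : e u = (Units.map (e : M →* N) u : N) := rfl
    rw [Ring.inverse_unit, hu, Ring.inverse_unit]
    rfl
  · rw [Ring.inverse_non_unit _ hx, Ring.inverse_non_unit _ ((MulEquiv.isUnit_map e).not.mpr hx),
      map_zero]

section MatrixAlgebra

variable {R : Type*} [CommRing R] {m n : Type*} [Fintype m] [Fintype n]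

theorem transpose_inv_transpose_mul_mul [DecidableEq n] {Γ : Matrix m m R} (hΓ : Γᵀ = Γ)
    (V : Matrix m n R) : ((Vᵀ * Γ * V)⁻¹)ᵀ = (Vᵀ * Γ * V)⁻¹ := by
  rw [transpose_nonsing_inv, transpose_mul, transpose_mul, transpose_transpose, hΓ,
    Matrix.mul_assoc]

theorem trace_neg_add_transpose_mul (X S : Matrix n n R) (hS : Sᵀ = S) :
    trace (-(X + Xᵀ) * S) = -2 * trace (X * S) := by
  rw [Matrix.neg_mul, trace_neg, Matrix.add_mul, trace_add, ← hS, trace_transpose_mul, hS]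
  ring

theorem trace_mul_transpose_mul {Γ P S : Matrix m m R} {N : Matrix n n R} (hΓ : Γᵀ = Γ)
    (hP : Pᵀ = P) (hS : Sᵀ = S) (hN : Nᵀ = N) (V H : Matrix m n R) :
    trace (P * Γ * H * N * Vᵀ * S) = trace ((Γ * P * S * V * N)ᵀ * H) :=
  calc trace (P * Γ * H * N * Vᵀ * S) = trace (N * Vᵀ * S * (P * Γ * H)) := by
        rw [trace_mul_comm (N * Vᵀ * S)]; simp only [Matrix.mul_assoc]
    _ = trace ((Γ * P * S * V * N)ᵀ * H) := by
        simp only [transpose_mul, hΓ, hP, hS, hN, Matrix.mul_assoc]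

end MatrixAlgebra

section MatrixCalculus

variable {𝕜 E : Type*} [RCLike 𝕜] [NormedAddCommGroup E] [NormedSpace 𝕜 E]
  {k l m n : Type*} [Fintype k] [Fintype l] [Fintype m] [Fintype n] {x : E}

/- Derivatives are stated as `∃ L, HasFDerivAt _ L x ∧ ∀ h, L h = _`: a derivative written out
in a statement gets its matrix types elaborated with the product topology instead of the norm
topology of `Matrix.normedAddCommGroup`, and `rw`/`simp` do not see through that mismatch. -/

noncomputable def Matrix.mulCLM : Matrix l m 𝕜 →L[𝕜] Matrix m n 𝕜 →L[𝕜] Matrix l n 𝕜 :=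
  LinearMap.toContinuousLinearMap <| LinearMap.toContinuousLinearMap.toLinearMap ∘ₗ
    LinearMap.mk₂ 𝕜 (· * ·) Matrix.add_mul Matrix.smul_mul Matrix.mul_add
      fun c A B => Matrix.mul_smul A c B

theorem HasFDerivAt.matrix_mul {f : E → Matrix l m 𝕜} {g : E → Matrix m n 𝕜}
    {f' : E →L[𝕜] Matrix l m 𝕜} {g' : E →L[𝕜] Matrix m n 𝕜}
    (hf : HasFDerivAt f f' x) (hg : HasFDerivAt g g' x) :
    ∃ L : E →L[𝕜] Matrix l n 𝕜, HasFDerivAt (fun y => f y * g y) L x ∧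
      ∀ h, L h = f x * g' h + f' h * g x :=
  ⟨_, mulCLM.hasFDerivAt_of_bilinear hf hg, fun _ => rfl⟩

theorem HasFDerivAt.matrix_transpose {f : E → Matrix m n 𝕜} {f' : E →L[𝕜] Matrix m n 𝕜}
    (hf : HasFDerivAt f f' x) :
    ∃ L : E →L[𝕜] Matrix n m 𝕜, HasFDerivAt (fun y => (f y)ᵀ) L x ∧ ∀ h, L h = (f' h)ᵀ :=
  ⟨_, (transposeLinearEquiv m n 𝕜 𝕜).toContinuousLinearEquiv.hasFDerivAt.comp x hf, fun _ => rfl⟩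

theorem HasFDerivAt.matrix_trace {f : E → Matrix n n 𝕜} {f' : E →L[𝕜] Matrix n n 𝕜}
    (hf : HasFDerivAt f f' x) :
    ∃ L : E →L[𝕜] 𝕜, HasFDerivAt (fun y => trace (f y)) L x ∧ ∀ h, L h = trace (f' h) :=
  ⟨_, (LinearMap.toContinuousLinearMap (traceLinearMap n 𝕜 𝕜)).hasFDerivAt.comp x hf,
    fun _ => rfl⟩

/- The entrywise sup norm on matrices is not submultiplicative, so `hasFDerivAt_ringInverse` does
not apply directly; it is transported from the Banach algebra of operators on `EuclideanSpace`. -/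
theorem HasFDerivAt.matrix_inv [DecidableEq n] {f : E → Matrix n n 𝕜}
    {f' : E →L[𝕜] Matrix n n 𝕜} (hf : HasFDerivAt f f' x) (hfx : IsUnit (f x)) :
    ∃ L : E →L[𝕜] Matrix n n 𝕜, HasFDerivAt (fun y => (f y)⁻¹) L x ∧
      ∀ h, L h = -((f x)⁻¹ * f' h * (f x)⁻¹) := by
  set φ := toEuclideanCLM (n := n) (𝕜 := 𝕜)
  let e := φ.toAlgEquiv.toLinearEquiv.toContinuousLinearEquiv
  have hφ : ∀ B : Matrix n n 𝕜, φ B⁻¹ = Ring.inverse (φ B) := fun B => by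
    rw [nonsing_inv_eq_ringInverse]; exact MulEquiv.map_ringInverse φ.toMulEquiv B
  have hinv : (fun y => (f y)⁻¹) = e.symm ∘ Ring.inverse ∘ e ∘ f := funext fun y => by
    change (f y)⁻¹ = φ.symm (Ring.inverse (φ (f y)))
    rw [← hφ, φ.symm_apply_apply]
  obtain ⟨u, hu⟩ := hfx.map φ
  have hu' : (↑u⁻¹ : EuclideanSpace 𝕜 n →L[𝕜] EuclideanSpace 𝕜 n) = φ (f x)⁻¹ := by
    rw [hφ, ← hu, Ring.inverse_unit]
  have hinvu := hasFDerivAt_ringInverse (𝕜 := 𝕜) u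
  rw [hu] at hinvu
  refine ⟨_, hinv ▸ e.symm.hasFDerivAt.comp x (hinvu.comp x (e.hasFDerivAt.comp x hf)),
    fun h => ?_⟩
  change φ.symm (-(↑u⁻¹ * φ (f' h) * ↑u⁻¹)) = _
  rw [hu', ← map_mul, ← map_mul, ← map_neg, φ.symm_apply_apply]

theorem HasFDerivAt.transpose_mul_mul {f : E → Matrix m n 𝕜} {f' : E →L[𝕜] Matrix m n 𝕜}
    (hf : HasFDerivAt f f' x) (Γ : Matrix m m 𝕜) :
    ∃ L : E →L[𝕜] Matrix n n 𝕜, HasFDerivAt (fun y => (f y)ᵀ * Γ * f y) L x ∧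
      ∀ h, L h = (f' h)ᵀ * Γ * f x + (f x)ᵀ * Γ * f' h := by
  obtain ⟨L₁, hL₁, hL₁h⟩ := hf.matrix_transpose
  obtain ⟨L₂, hL₂, hL₂h⟩ := hL₁.matrix_mul (hasFDerivAt_const Γ x)
  obtain ⟨L₃, hL₃, hL₃h⟩ := hL₂.matrix_mul hf
  refine ⟨L₃, hL₃, fun h => ?_⟩
  rw [hL₃h, hL₂h, hL₁h]
  simp [add_comm]

theorem HasFDerivAt.trace_transpose_mul_mul_mul_mul {P : E → Matrix m m 𝕜}
    {P' : E →L[𝕜] Matrix m m 𝕜} (hP : HasFDerivAt P P' x) (hPx : (P x)ᵀ = P x)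
    (D : Matrix m k 𝕜) {M : Matrix m m 𝕜} (hM : Mᵀ = M) :
    ∃ L : E →L[𝕜] 𝕜, HasFDerivAt (fun y => trace (Dᵀ * P y * M * P y * D)) L x ∧
      ∀ h, L h = trace (P' h * (D * Dᵀ * P x * M + (D * Dᵀ * P x * M)ᵀ)) := by
  obtain ⟨L₁, hL₁, hL₁h⟩ := (hasFDerivAt_const Dᵀ x).matrix_mul hP
  obtain ⟨L₂, hL₂, hL₂h⟩ := hL₁.matrix_mul (hasFDerivAt_const M x)
  obtain ⟨L₃, hL₃, hL₃h⟩ := hL₂.matrix_mul hP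
  obtain ⟨L₄, hL₄, hL₄h⟩ := hL₃.matrix_mul (hasFDerivAt_const D x)
  obtain ⟨L, hL, hLh⟩ := hL₄.matrix_trace
  refine ⟨L, hL, fun h => ?_⟩
  rw [hLh, hL₄h, hL₃h, hL₂h, hL₁h]
  simp only [_root_.zero_apply, Matrix.mul_zero, Matrix.zero_mul, add_zero, zero_add]
  set Y := P' h
  have hW : (D * Dᵀ * P x * M)ᵀ = M * P x * (D * Dᵀ) := by
    simp only [transpose_mul, transpose_transpose, hM, hPx, Matrix.mul_assoc]
  have h₁ : trace (Dᵀ * P x * M * Y * D) = trace (Y * (D * Dᵀ * P x * M)) := by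
    rw [trace_mul_comm, trace_mul_comm Y]; simp only [Matrix.mul_assoc]
  have h₂ : trace (Dᵀ * Y * M * P x * D) = trace (Y * (D * Dᵀ * P x * M)ᵀ) :=
    calc trace (Dᵀ * Y * M * P x * D) = trace (D * Dᵀ * Y * (M * P x)) := by
          rw [trace_mul_comm]; simp only [Matrix.mul_assoc]
      _ = trace (Y * (D * Dᵀ * P x * M)ᵀ) := by
          rw [hW, trace_mul_comm, trace_mul_comm Y]; simp only [Matrix.mul_assoc]
  rw [Matrix.add_mul, trace_add, h₁, h₂, Matrix.mul_add, trace_add]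

end MatrixCalculus

section Projection

variable {E : Type*} [NormedAddCommGroup E] [NormedSpace ℝ E] {x : E} {d s : ℕ}
  {Γ : Matrix (Fin d) (Fin d) ℝ}

theorem pmat_transpose (hΓ : Γᵀ = Γ) (V : Matrix (Fin d) (Fin s) ℝ) :
    (Pmat Γ V)ᵀ = Pmat Γ V := by
  rw [Pmat, transpose_sub, transpose_nonsing_inv, hΓ, transpose_mul, transpose_mul,
    transpose_transpose, transpose_inv_transpose_mul_mul hΓ]
  simp only [Matrix.mul_assoc]

theorem pmat_mul (hΓ : IsUnit Γ) (V : Matrix (Fin d) (Fin s) ℝ) :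
    Pmat Γ V * Γ = 1 - V * (Vᵀ * Γ * V)⁻¹ * Vᵀ * Γ := by
  rw [Pmat, Matrix.sub_mul, nonsing_inv_mul _ ((isUnit_iff_isUnit_det Γ).mp hΓ)]

theorem HasFDerivAt.pmat {f : E → Matrix (Fin d) (Fin s) ℝ}
    {f' : E →L[ℝ] Matrix (Fin d) (Fin s) ℝ} (hf : HasFDerivAt f f' x) (hΓ : Γᵀ = Γ)
    (hΓu : IsUnit Γ) (hfx : IsUnit ((f x)ᵀ * Γ * f x)) :
    ∃ L : E →L[ℝ] Matrix (Fin d) (Fin d) ℝ, HasFDerivAt (fun y => Pmat Γ (f y)) L x ∧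
      ∀ h, L h = -(Pmat Γ (f x) * Γ * f' h * ((f x)ᵀ * Γ * f x)⁻¹ * (f x)ᵀ +
        (Pmat Γ (f x) * Γ * f' h * ((f x)ᵀ * Γ * f x)⁻¹ * (f x)ᵀ)ᵀ) := by
  obtain ⟨L₁, hL₁, hL₁h⟩ := hf.transpose_mul_mul Γ
  obtain ⟨L₂, hL₂, hL₂h⟩ := hL₁.matrix_inv hfx
  obtain ⟨L₃, hL₃, hL₃h⟩ := hf.matrix_mul hL₂
  obtain ⟨L₄, hL₄, hL₄h⟩ := hf.matrix_transpose
  obtain ⟨L₅, hL₅, hL₅h⟩ := hL₃.matrix_mul hL₄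
  refine ⟨-L₅, hL₅.const_sub Γ⁻¹, fun h => ?_⟩
  rw [_root_.neg_apply, hL₅h, hL₄h, hL₃h, hL₂h, hL₁h, pmat_mul hΓu]
  set V := f x
  set H := f' h
  have hN : ((Vᵀ * Γ * V)⁻¹)ᵀ = (Vᵀ * Γ * V)⁻¹ := transpose_inv_transpose_mul_mul hΓ V
  set N := (Vᵀ * Γ * V)⁻¹
  simp only [transpose_mul, transpose_sub, transpose_one, transpose_transpose, hΓ, hN]
  simp only [Matrix.mul_add, Matrix.add_mul, Matrix.mul_sub, Matrix.sub_mul, Matrix.mul_neg,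
    Matrix.neg_mul, Matrix.mul_one, Matrix.one_mul, Matrix.mul_assoc]
  abel

end Projection

/-- the function `F(V) = Tr[Dᵀ P_V M P_V D]` is Fréchet differentiable at every
`V` with `VᵀΓV` invertible, and its Euclidean gradient is
`G = −4 Γ P_V Sym(D Dᵀ P_V M) V (VᵀΓV)⁻¹`, i.e. `D_V F[H] = Tr[Gᵀ H]` for all `H`. -/
theorem stmt13 {d k s : ℕ} (Γ : Matrix (Fin d) (Fin d) ℝ) (hΓ : Γ.PosDef)
    (D : Matrix (Fin d) (Fin k) ℝ) (M : Matrix (Fin d) (Fin d) ℝ) (hM : Mᵀ = M)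
    (V : Matrix (Fin d) (Fin s) ℝ) (hV : IsUnit (Vᵀ * Γ * V)) :
    ∃ L : Matrix (Fin d) (Fin s) ℝ →L[ℝ] ℝ,
      HasFDerivAt (fun W : Matrix (Fin d) (Fin s) ℝ =>
        Matrix.trace (Dᵀ * Pmat Γ W * M * Pmat Γ W * D)) L V ∧
      ∀ H : Matrix (Fin d) (Fin s) ℝ,
        L H = Matrix.trace
          (((-4 : ℝ) • (Γ * Pmat Γ V * symPart (D * Dᵀ * Pmat Γ V * M) * V *
            (Vᵀ * Γ * V)⁻¹))ᵀ * H) := by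
  have hΓt : Γᵀ = Γ := by simpa using hΓ.isHermitian.eq
  obtain ⟨LP, hLP, hLPH⟩ := (hasFDerivAt_id V).pmat hΓt hΓ.isUnit hV
  obtain ⟨L, hL, hLH⟩ :=
    HasFDerivAt.trace_transpose_mul_mul_mul_mul (P := Pmat Γ) hLP (pmat_transpose hΓt V) D hM
  refine ⟨L, hL, fun H => (hLH H).trans ?_⟩
  have hδP : LP H = -(Pmat Γ V * Γ * H * (Vᵀ * Γ * V)⁻¹ * Vᵀ +
      (Pmat Γ V * Γ * H * (Vᵀ * Γ * V)⁻¹ * Vᵀ)ᵀ) := hLPH H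
  rw [hδP, symPart]
  set S := D * Dᵀ * Pmat Γ V * M + (D * Dᵀ * Pmat Γ V * M)ᵀ
  have hS : Sᵀ = S := by rw [transpose_add, transpose_transpose, add_comm]
  rw [trace_neg_add_transpose_mul _ _ hS,
    trace_mul_transpose_mul hΓt (pmat_transpose hΓt V) hS (transpose_inv_transpose_mul_mul hΓt V),
    Matrix.mul_smul, Matrix.smul_mul, Matrix.smul_mul, smul_smul, transpose_smul,
    Matrix.smul_mul, trace_smul, smul_eq_mul]
  norm_num
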